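/- (Soundness direction of Armstrong completeness, counterexample construction) Let T be a set of dependence atoms over variables V, and let y⃗, x⃗ ⊆ V. Let z⃗ = { z ∈ V : =(y⃗,{z}) is derivable from T by Armstrong's axioms }, and suppose x ∈ x⃗ with x ∉ z⃗. Define the two-element team X = {s, s'} over domain {0,1} by: s(v) = s'(v) = 0 for v ∈ z⃗, and s(v)=0, s'(v)=1 for v ∉ z⃗. Then X satisfies every atom of T but X does not satisfy =(y⃗,x⃗). -/

import Mathlib

/-! The assignments `s` and `s'` agree exactly on the Armstrong closure `Z` of `y`, so on the
team `{s, s'}` an atom `=(u, v)` holds iff `u ⊆ Z → v ⊆ Z`. The closure is closed under the atoms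
of `T` (by augmentation, union and transitivity), contains `y`, and misses `x`. -/

/-- `agrees s s' w`: assignments `s` and `s'` agree on all variables in `w`. -/
def agrees {V M : Type*} (s s' : V → M) (w : Set V) : Prop := ∀ v ∈ w, s v = s' v

/-- The team `X` satisfies the functional dependence atom `=(y,x)`. -/
def depAtom {V M : Type*} (X : Set (V → M)) (y x : Set V) : Prop :=
  ∀ s ∈ X, ∀ s' ∈ X, agrees s s' y → agrees s s' x

/-- The team `X` satisfies the conditional independence atom `y ⊥_x z`. -/
def condIndep {V M : Type*} (X : Set (V → M)) (y x z : Set V) : Prop :=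
  ∀ s ∈ X, ∀ s' ∈ X, agrees s s' x →
    ∃ s'' ∈ X, agrees s'' s x ∧ agrees s'' s y ∧ agrees s'' s' z

/-- The team `X` satisfies the independence atom `a ⊥ b` (single variables). -/
def indepAtom {V M : Type*} (X : Set (V → M)) (a b : V) : Prop :=
  ∀ s ∈ X, ∀ s' ∈ X, ∃ s'' ∈ X, s'' b = s b ∧ s'' a = s' a

/-- Derivability of dependence atoms from a set `T` of atoms by Armstrong's axioms. -/
inductive ArmDeriv {V : Type*} [DecidableEq V] (T : Set (Finset V × Finset V)) :
    Finset V → Finset V → Prop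
  | mem (y x : Finset V) (h : (y, x) ∈ T) : ArmDeriv T y x
  | refl (x : Finset V) : ArmDeriv T x x
  | aug (y z x : Finset V) (hyz : y ⊆ z) (h : ArmDeriv T y x) : ArmDeriv T z x
  | union (y x₁ x₂ : Finset V) (h₁ : ArmDeriv T y x₁) (h₂ : ArmDeriv T y x₂) :
      ArmDeriv T y (x₁ ∪ x₂)
  | trans (y z x : Finset V) (h₁ : ArmDeriv T y z) (h₂ : ArmDeriv T z x) : ArmDeriv T y x

lemma agrees_comm {V M : Type*} {s s' : V → M} {w : Set V} :
    agrees s s' w ↔ agrees s' s w :=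
  ⟨fun h v hv => (h v hv).symm, fun h v hv => (h v hv).symm⟩

lemma depAtom_pair_iff {V M : Type*} {s s' : V → M} {y x : Set V} :
    depAtom {s, s'} y x ↔ (agrees s s' y → agrees s s' x) := by
  refine ⟨fun h => h s (by simp) s' (by simp), fun h t ht t' ht' => ?_⟩
  rcases ht with rfl | rfl <;> rcases ht' with rfl | rfl
  · exact fun _ _ _ => rfl
  · exact h
  · simpa only [agrees_comm (s := t)] using h
  · exact fun _ _ _ => rfl

lemma agrees_zero_indicator_iff {V : Type*} {Z w : Set V} [DecidablePred (· ∈ Z)] :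
    agrees (fun _ => (0 : Fin 2)) (fun v => if v ∈ Z then 0 else 1) w ↔ w ⊆ Z := by
  refine forall₂_congr fun v _ => ?_
  by_cases hv : v ∈ Z <;> simp [hv]

namespace ArmDeriv

variable {V : Type*} [DecidableEq V] {T : Set (Finset V × Finset V)}

lemma of_subset {y x : Finset V} (hxy : x ⊆ y) : ArmDeriv T y x :=
  aug x y x hxy (refl x)

lemma of_forall_singleton {y x : Finset V} (h : ∀ v ∈ x, ArmDeriv T y {v}) :
    ArmDeriv T y x := by
  induction x using Finset.induction_on with
  | empty => exact of_subset (Finset.empty_subset y)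
  | insert v x _ ih =>
    rw [Finset.insert_eq]
    exact union y {v} x (h v (by simp)) (ih fun w hw => h w (by simp [hw]))

lemma singleton_of_mem {y x : Finset V} (h : ArmDeriv T y x) {v : V} (hv : v ∈ x) :
    ArmDeriv T y {v} :=
  trans y x {v} h (of_subset (Finset.singleton_subset_iff.mpr hv))

lemma closure_closed {y a b : Finset V} (hab : (a, b) ∈ T)
    (ha : (a : Set V) ⊆ {z | ArmDeriv T y {z}}) : (b : Set V) ⊆ {z | ArmDeriv T y {z}} :=
  fun _ hw => singleton_of_mem (trans y a b (of_forall_singleton ha) (mem a b hab)) hw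

end ArmDeriv

open Classical in
theorem stmt6 {V : Type*} [DecidableEq V] (T : Set (Finset V × Finset V))
    (y xs : Finset V) (x : V) (hx : x ∈ xs)
    (hxz : ¬ ArmDeriv T y {x}) :
    let zset : Set V := {z | ArmDeriv T y {z}}
    let s : V → Fin 2 := fun _ => 0
    let s' : V → Fin 2 := fun v => if v ∈ zset then 0 else 1
    let X : Set (V → Fin 2) := {s, s'}
    (∀ a ∈ T, depAtom X (↑a.1) (↑a.2)) ∧ ¬ depAtom X (↑y) (↑xs) := by
  intro zset s s' X
  simp only [X, s, s', depAtom_pair_iff, agrees_zero_indicator_iff]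
  have hy : (y : Set V) ⊆ zset := fun _ hv => ArmDeriv.singleton_of_mem (ArmDeriv.refl y) hv
  exact ⟨fun ⟨a, b⟩ hab => ArmDeriv.closure_closed hab,
    fun h => hxz (h hy hx)⟩
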